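/- For all a, b ∈ A and every index i ∈ {1,2,3} one has (a e_i)·(b e_i) = −a b* e₀. -/

import Mathlib

open LaurentPolynomial

/-- `A = ℤ[z, z⁻¹]`, the Laurent polynomial ring over the integers. -/
abbrev A : Type := LaurentPolynomial ℤ

/-- The conjugation `f(z) ↦ f(z⁻¹)` on `A`. -/
noncomputable def conj : A →+* A := (LaurentPolynomial.invert (R := ℤ)).toRingEquiv.toRingHom

/-- The fixed subring `A₀ = {f ∈ A | f* = f}`. -/
noncomputable def A0 : Subring A := RingHom.eqLocus conj (RingHom.id A)

/-- `E = A⁴`. -/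
abbrev E : Type := Fin 4 → A

/-- The norm `N(x) = ∑ₖ xₖ xₖ*`. -/
noncomputable def N (x : E) : A := ∑ k, x k * conj (x k)

/-- The standard `A`-basis vectors of `E = A⁴`. -/
noncomputable def e (k : Fin 4) : E := Pi.single k 1

/-- Yang's multiplication `x ∘ y = (p, q, r, s)`. -/
noncomputable def yang (x y : E) : E :=
  ![x 0 * y 0 - x 1 * conj (y 1) - x 2 * conj (y 2) - x 3 * conj (y 3),
    x 0 * y 1 + x 1 * conj (y 0) + conj (x 2) * conj (y 3) - conj (x 3) * conj (y 2),
    x 0 * y 2 - conj (x 1) * conj (y 3) + x 2 * conj (y 0) + conj (x 3) * conj (y 1),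
    x 0 * y 3 + conj (x 1) * conj (y 2) - conj (x 2) * conj (y 1) + x 3 * conj (y 0)]

/-!
Polarizing `N(xy) = N(x)N(y)` in both arguments gives, for the polar form `B` of `N`,
`B(xy, x'y') + B(xy', x'y) = B(x, x') B(y, y')`. Taking `x = a eᵢ`, `x' = f e₀`, `y = b eᵢ`,
`y' = e₀` and writing `p = (a eᵢ)(b eᵢ)`, the element `c = p₀ + a b*` satisfies `c f* + f c* = 0`
for every `f ∈ A`; `f = 1` and `f = z` give `(z⁻¹ - z) c = 0`, so `p₀ = -a b*`. Then
`N(p) = N(a eᵢ) N(b eᵢ) = p₀ p₀*` leaves `∑_{k ≠ 0} pₖ pₖ* = 0`, and the constant coefficient of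
`g g*` is the sum of the squares of the coefficients of `g`, so `pₖ = 0` for `k ≠ 0`.
-/

namespace LaurentPolynomial

variable {R : Type*}

lemma coeff_mul_invert_self_zero [CommRing R] (f : R[T;T⁻¹]) :
    (f * invert f).coeff 0 = ∑ n ∈ f.coeff.support, f.coeff n ^ 2 := by
  classical
  rw [AddMonoidAlgebra.coeff_mul, Finsupp.sum]
  refine Finset.sum_congr rfl fun m _ => ?_
  rw [Finsupp.sum, Finset.sum_eq_single (-m)]
  · rw [if_pos (add_neg_cancel m), invert_apply, neg_neg, sq]
  · intro n _ hn
    rw [if_neg (by contrapose! hn; linarith)]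
  · intro hm
    rw [Finsupp.notMem_support_iff.mp hm, mul_zero, ite_self]

lemma eq_zero_of_sum_mul_invert_self_eq_zero [CommRing R] [LinearOrder R] [IsStrictOrderedRing R]
    {ι : Type*} {s : Finset ι} {g : ι → R[T;T⁻¹]} (h : ∑ k ∈ s, g k * invert (g k) = 0) :
    ∀ k ∈ s, g k = 0 := by
  have hcoeff : ∑ k ∈ s, ∑ n ∈ (g k).coeff.support, (g k).coeff n ^ 2 = 0 := by
    simpa [← coeff_mul_invert_self_zero] using congrArg (fun f : R[T;T⁻¹] => f.coeff 0) h
  intro k hk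
  have hk0 := (Finset.sum_eq_zero_iff_of_nonneg fun k _ =>
    Finset.sum_nonneg fun n _ => sq_nonneg ((g k).coeff n)).mp hcoeff k hk
  have hsq := (Finset.sum_eq_zero_iff_of_nonneg fun n _ => sq_nonneg ((g k).coeff n)).mp hk0
  rw [← AddMonoidAlgebra.coeff_eq_zero, ← Finsupp.support_eq_empty]
  exact Finset.eq_empty_of_forall_notMem fun n hn =>
    Finsupp.mem_support_iff.mp hn (pow_eq_zero_iff two_ne_zero |>.mp (hsq n hn))

lemma eq_zero_of_forall_mul_invert_add_eq_zero [CommRing R] [IsDomain R] {c : R[T;T⁻¹]}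
    (h : ∀ f, c * invert f + f * invert c = 0) : c = 0 := by
  have h1 := h 1
  have hT := h (T 1)
  simp only [map_one, mul_one, one_mul, invert_T] at h1 hT
  have hprod : (T (-1) - T 1) * c = 0 := by linear_combination hT - T 1 * h1
  refine (mul_eq_zero.mp hprod).resolve_left fun h0 => ?_
  simpa using congrArg (fun f : R[T;T⁻¹] => f.coeff 1) h0

end LaurentPolynomial

lemma conj_apply (f : A) : conj f = invert f := rfl

lemma conj_conj (f : A) : conj (conj f) = f := involutive_invert f

noncomputable def polar (x y : E) : A := ∑ k, (x k * conj (y k) + y k * conj (x k))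

lemma N_add (x y : E) : N (x + y) = N x + N y + polar x y := by
  simp only [N, polar, Pi.add_apply, map_add, ← Finset.sum_add_distrib]
  exact Finset.sum_congr rfl fun k _ => by ring

lemma polar_add_left (x x' y : E) : polar (x + x') y = polar x y + polar x' y := by
  simp only [polar, Pi.add_apply, map_add, ← Finset.sum_add_distrib]
  exact Finset.sum_congr rfl fun k _ => by ring

lemma polar_add_right (x y y' : E) : polar x (y + y') = polar x y + polar x y' := by
  simp only [polar, Pi.add_apply, map_add, ← Finset.sum_add_distrib]
  exact Finset.sum_congr rfl fun k _ => by ring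

lemma polar_single_right (x : E) (j : Fin 4) (g : A) :
    polar x (Pi.single j g) = x j * conj g + g * conj (x j) := by
  rw [polar, Finset.sum_eq_single j (fun k _ hk => by simp [Pi.single_eq_of_ne hk]) (by simp)]
  simp

lemma N_single (j : Fin 4) (g : A) : N (Pi.single j g) = g * conj g := by
  rw [N, Finset.sum_eq_single j (fun k _ hk => by simp [Pi.single_eq_of_ne hk]) (by simp)]
  simp

lemma smul_e (f : A) (j : Fin 4) : f • e j = Pi.single j f := by
  rw [e, ← Pi.single_smul', smul_eq_mul, mul_one]

section Lagrange

variable {mul : E →ₗ[A0] E →ₗ[A0] E} (hL : ∀ x y : E, N (mul x y) = N x * N y)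
include hL

lemma polar_mul_left (x x' y : E) : polar (mul x y) (mul x' y) = polar x x' * N y := by
  have h := hL (x + x') y
  rw [map_add, LinearMap.add_apply, N_add, N_add, hL x y, hL x' y] at h
  linear_combination h

lemma polar_mul_add_polar_mul (x x' y y' : E) :
    polar (mul x y) (mul x' y') + polar (mul x y') (mul x' y) = polar x x' * polar y y' := by
  have h := polar_mul_left hL x x' (y + y')
  rw [map_add, map_add, polar_add_left, polar_add_right, polar_add_right, N_add,
    polar_mul_left hL, polar_mul_left hL] at h
  linear_combination h

end Lagrange

section SquareLemma

variable {mul : E →ₗ[A0] E →ₗ[A0] E} (hL : ∀ x y : E, N (mul x y) = N x * N y)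
  (hright : ∀ x : E, mul x (e 0) = x) (hA : ∀ (a : A) (y : E), mul (a • e 0) y = a • y)
  {i : Fin 4} (hi : i ≠ 0) (a b : A)
include hL hright hA hi

lemma mul_single_single_apply_zero :
    mul (Pi.single i a) (Pi.single i b) 0 = -(a * conj b) := by
  suffices mul (Pi.single i a) (Pi.single i b) 0 + a * conj b = 0 by linear_combination this
  refine LaurentPolynomial.eq_zero_of_forall_mul_invert_add_eq_zero fun f => ?_
  have h := polar_mul_add_polar_mul hL (Pi.single i a) (f • e 0) (Pi.single i b) (e 0)
  have hfb : f • (Pi.single i b : E) = Pi.single i (f * b) := by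
    rw [← Pi.single_smul', smul_eq_mul]
  rw [hA, hA, hright, hfb, smul_e, polar_single_right, polar_single_right, polar_single_right,
    Pi.single_eq_of_ne hi.symm, Pi.single_eq_same] at h
  simp only [map_mul, map_zero, mul_zero, zero_mul, add_zero] at h
  simp only [← conj_apply, map_add, map_mul, conj_conj]
  linear_combination h

lemma mul_single_single : mul (Pi.single i a) (Pi.single i b) = -Pi.single 0 (a * conj b) := by
  have h0 := mul_single_single_apply_zero hL hright hA hi a b
  have hN := hL (Pi.single i a) (Pi.single i b)
  rw [N_single, N_single, N, Fin.sum_univ_succ, h0] at hN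
  simp only [map_neg, map_mul, conj_conj] at hN
  have hsum : ∑ k : Fin 3, mul (Pi.single i a) (Pi.single i b) k.succ *
      conj (mul (Pi.single i a) (Pi.single i b) k.succ) = 0 := by
    linear_combination hN
  have hrest := LaurentPolynomial.eq_zero_of_sum_mul_invert_self_eq_zero hsum
  funext k
  cases k using Fin.cases with
  | zero => simp [h0]
  | succ k => simp [hrest k (Finset.mem_univ k)]

end SquareLemma

/-- Lemma 4.6: for all `a, b ∈ A` and every index `i ∈ {1,2,3}`,
`(a eᵢ)·(b eᵢ) = −a b* e₀`. -/
theorem square_lemma (mul : E →ₗ[A0] E →ₗ[A0] E)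
    (hL : ∀ x y : E, N (mul x y) = N x * N y)
    (hid : ∀ x : E, mul (e 0) x = x ∧ mul x (e 0) = x)
    (hA : ∀ (a : A) (y : E), mul (a • e 0) y = a • y) :
    ∀ (a b : A) (i : Fin 4), i ≠ 0 →
      mul (a • e i) (b • e i) = -((a * conj b) • e 0) := by
  intro a b i hi
  simp only [smul_e]
  exact mul_single_single hL (fun x => (hid x).2) hA hi a b
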